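/- arXiv:1901.07888 — 5 statements merged into one kernel-verified Lean document; each statement's English description precedes it below -/
import Mathlib

section
/- For n ≥ 2, the vector space of 'Riemann candidates', i.e. tensors R : Fin n → Fin n → Fin n → Fin n → ℝ satisfying R_{kl,ij} = −R_{lk,ij} = −R_{kl,ji} = R_{ij,kl} and the first Bianchi identity R_{kl,ij} + R_{ki,jl} + R_{kj,li} = 0, has dimension n²(n²−1)/12. -/
/-!
The Riemann candidates form the image of an explicit idempotent endomorphism `P` of the space of
4-tensors, so their dimension is `trace P`. Each of the 24 terms of `P` permutes the four index
slots by some `σ`, and the trace of `x ↦ x ∘ σ` is `n ^ (number of cycles of σ)`; the weighted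
sum of these powers is `(n⁴ - n²) / 12`.
-/

open Module

variable {K ι : Type*} [Field K]

variable (K ι) in
def IsRiemannCandidate (R : ι → ι → ι → ι → K) : Prop :=
  (∀ k l i j, R k l i j = - R l k i j ∧ R k l i j = - R k l j i ∧ R k l i j = R i j k l) ∧
    (∀ k l i j, R k l i j + R k i j l + R k j l i = 0)

variable (K ι) in
/-- `P = A - Alt`, where `A` averages over the 8 pair symmetries and `Alt` is the total
antisymmetrisation (24 terms of weight `±1/24`); on the terms of `A` the weights combine to
`1/8 - 1/24 = 1/12`. For a tensor with the pair symmetries, `Alt` is a third of the Bianchi sum. -/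
def riemannProj : (ι → ι → ι → ι → K) →ₗ[K] (ι → ι → ι → ι → K) where
  toFun x k l i j :=
    (x k l i j - x l k i j - x k l j i + x l k j i + x i j k l - x j i k l - x i j l k + x j i l k)
      / 12
    + (x k i l j - x k i j l - x k j l i + x k j i l - x l i k j + x l i j k + x l j k i - x l j i k
      - x i k l j + x i k j l + x i l k j - x i l j k + x j k l i - x j k i l - x j l k i
      + x j l i k) / 24
  map_add' x y := by funext k l i j; simp only [Pi.add_apply]; ring
  map_smul' c x := by funext k l i j; simp only [Pi.smul_apply, smul_eq_mul, RingHom.id_apply]; ring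

variable (K ι) in
def tensorUncurry : (ι → ι → ι → ι → K) ≃ₗ[K] (ι × ι × ι × ι → K) where
  toFun x p := x p.1 p.2.1 p.2.2.1 p.2.2.2
  invFun f k l i j := f (k, l, i, j)
  map_add' _ _ := rfl
  map_smul' _ _ := rfl
  left_inv _ := rfl
  right_inv _ := rfl

theorem trace_eq_sum_tensor_diag [Fintype ι] [DecidableEq ι]
    (f : (ι → ι → ι → ι → K) →ₗ[K] (ι → ι → ι → ι → K)) :
    LinearMap.trace K _ f = ∑ k, ∑ l, ∑ i, ∑ j,
      f (fun a b c d => if a = k ∧ b = l ∧ c = i ∧ d = j then 1 else 0) k l i j := by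
  rw [← LinearMap.trace_conj' f (tensorUncurry K ι),
    LinearMap.trace_eq_matrix_trace K (Pi.basisFun K (ι × ι × ι × ι)), Matrix.trace]
  simp [Fintype.sum_prod_type, tensorUncurry, Pi.single_apply, Prod.ext_iff]

variable [CharZero K]

theorem isRiemannCandidate_riemannProj (x : ι → ι → ι → ι → K) :
    IsRiemannCandidate K ι (riemannProj K ι x) := by
  refine ⟨fun k l i j => ⟨?_, ?_, ?_⟩, fun k l i j => ?_⟩ <;>
    simp only [riemannProj, LinearMap.coe_mk, AddHom.coe_mk] <;> ring

theorem riemannProj_eq_self {R : ι → ι → ι → ι → K} (hR : IsRiemannCandidate K ι R) :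
    riemannProj K ι R = R := by
  obtain ⟨hsymm, hbianchi⟩ := hR
  funext k l i j
  simp only [riemannProj, LinearMap.coe_mk, AddHom.coe_mk]
  grind

theorem mem_range_riemannProj {R : ι → ι → ι → ι → K} :
    R ∈ LinearMap.range (riemannProj K ι) ↔ IsRiemannCandidate K ι R :=
  ⟨by rintro ⟨x, rfl⟩; exact isRiemannCandidate_riemannProj x,
    fun hR => ⟨R, riemannProj_eq_self hR⟩⟩

theorem isProj_riemannProj :
    LinearMap.IsProj (LinearMap.range (riemannProj K ι)) (riemannProj K ι) :=
  ⟨LinearMap.mem_range_self _, fun _ hR => riemannProj_eq_self (mem_range_riemannProj.1 hR)⟩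

variable [Fintype ι]

theorem trace_riemannProj [DecidableEq ι] :
    LinearMap.trace K _ (riemannProj K ι) =
      (Fintype.card ι ^ 2 * (Fintype.card ι ^ 2 - 1) / 12 : K) := by
  rw [trace_eq_sum_tensor_diag]
  simp only [riemannProj, LinearMap.coe_mk, AddHom.coe_mk, ite_and, Finset.sum_add_distrib,
    Finset.sum_sub_distrib, ← Finset.sum_div]
  simp only [Finset.sum_ite_eq, Finset.sum_ite_eq', Finset.mem_univ, if_true, Finset.sum_const,
    Finset.card_univ, nsmul_eq_mul, Finset.sum_ite_irrel, mul_one, mul_ite, mul_zero]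
  ring

theorem finrank_range_riemannProj :
    finrank K (LinearMap.range (riemannProj K ι)) =
      Fintype.card ι ^ 2 * (Fintype.card ι ^ 2 - 1) / 12 := by
  classical
  have h := isProj_riemannProj.trace.symm.trans (trace_riemannProj (K := K) (ι := ι))
  rw [eq_div_iff (by norm_num)] at h
  refine (Nat.div_eq_of_eq_mul_left (by norm_num) ?_).symm
  rw [Nat.mul_sub_one, ← Nat.cast_inj (R := K), Nat.cast_sub (Nat.le_mul_self _)]
  push_cast
  linear_combination -h

theorem stmt_2_general (n : ℕ)
    (S : Submodule ℝ (Fin n → Fin n → Fin n → Fin n → ℝ))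
    (hS : ∀ R, R ∈ S ↔
      ((∀ k l i j, R k l i j = - R l k i j ∧ R k l i j = - R k l j i ∧
          R k l i j = R i j k l) ∧
        (∀ k l i j, R k l i j + R k i j l + R k j l i = 0))) :
    Module.finrank ℝ S = n ^ 2 * (n ^ 2 - 1) / 12 := by
  obtain rfl : S = LinearMap.range (riemannProj ℝ (Fin n)) :=
    SetLike.ext fun R => (hS R).trans mem_range_riemannProj.symm
  simpa using finrank_range_riemannProj (K := ℝ) (ι := Fin n)

theorem stmt_2 (n : ℕ) (hn : 2 ≤ n)
    (S : Submodule ℝ (Fin n → Fin n → Fin n → Fin n → ℝ))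
    (hS : ∀ R, R ∈ S ↔
      ((∀ k l i j, R k l i j = - R l k i j ∧ R k l i j = - R k l j i ∧
          R k l i j = R i j k l) ∧
        (∀ k l i j, R k l i j + R k i j l + R k j l i = 0))) :
    Module.finrank ℝ S = n ^ 2 * (n ^ 2 - 1) / 12 :=
  stmt_2_general n S hS
end

section
/- For n ≥ 2, the vector space of Lanczos-type 3-tensors L : Fin n → Fin n → Fin n → ℝ satisfying L_{ij,k} + L_{ji,k} = 0 and L_{ij,k} + L_{jk,i} + L_{ki,j} = 0 has dimension n(n²−1)/3; in particular for n = 4 the dimension is 20 = 24 − 4. -/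
/-!
The Lanczos tensors are the image of the idempotent
`P L_{ijk} = (L_{ijk} - L_{jik} - L_{kij} + L_{kji}) / 3`, so their dimension is `tr P`.
`P` is a combination of permutations of the index triple, and the trace of a permutation of
coordinates is its number of fixed points; these are `n³, n², n, n²`, which gives
`tr P = (n³ - n² - n + n²) / 3 = n (n² - 1) / 3`.
-/

open LinearMap Module Finset

theorem LinearMap.trace_funLeft {K α : Type*} [Field K] [Fintype α] [DecidableEq α]
    (f : α → α) : trace K (α → K) (funLeft K K f) = #{a | f a = a} := by
  rw [trace_eq_matrix_trace K (Pi.basisFun K α), Matrix.trace]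
  simp [Pi.single_apply, sum_boole]

section Lanczos

variable (K ι : Type*)

def lanczosTensors [CommRing K] : Submodule K (ι → ι → ι → K) where
  carrier := {L | (∀ i j k, L i j k + L j i k = 0) ∧ ∀ i j k, L i j k + L j k i + L k i j = 0}
  add_mem' {L M} hL hM := by
    refine ⟨fun i j k => ?_, fun i j k => ?_⟩
    · simp only [Pi.add_apply]; linear_combination hL.1 i j k + hM.1 i j k
    · simp only [Pi.add_apply]; linear_combination hL.2 i j k + hM.2 i j k
  zero_mem' := by simp
  smul_mem' c L hL := by
    refine ⟨fun i j k => ?_, fun i j k => ?_⟩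
    · simp only [Pi.smul_apply, smul_eq_mul]; linear_combination c * hL.1 i j k
    · simp only [Pi.smul_apply, smul_eq_mul]; linear_combination c * hL.2 i j k

def uncurry₃ [CommRing K] : (ι → ι → ι → K) ≃ₗ[K] (ι × ι × ι → K) where
  toFun L p := L p.1 p.2.1 p.2.2
  invFun f i j k := f (i, j, k)
  map_add' _ _ := rfl
  map_smul' _ _ := rfl
  left_inv _ := rfl
  right_inv _ := rfl

variable [Field K]

noncomputable def lanczosProj : Module.End K (ι → ι → ι → K) :=
  (uncurry₃ K ι).symm.conj <| (3 : K)⁻¹ •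
    (1 - funLeft K K (fun p : ι × ι × ι => (p.2.1, p.1, p.2.2))
      - funLeft K K (fun p : ι × ι × ι => (p.2.2, p.1, p.2.1))
      + funLeft K K (fun p : ι × ι × ι => (p.2.2, p.2.1, p.1)))

variable {K ι}

theorem lanczosProj_apply (L : ι → ι → ι → K) (i j k : ι) :
    lanczosProj K ι L i j k = (L i j k - L j i k - L k i j + L k j i) / 3 := by
  change (3 : K)⁻¹ * (L i j k - L j i k - L k i j + L k j i) = _
  ring

theorem lanczosProj_mem (L : ι → ι → ι → K) : lanczosProj K ι L ∈ lanczosTensors K ι :=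
  ⟨fun i j k => by simp only [lanczosProj_apply]; ring,
    fun i j k => by simp only [lanczosProj_apply]; ring⟩

theorem lanczosProj_eq_self [CharZero K] {L : ι → ι → ι → K} (hL : L ∈ lanczosTensors K ι) :
    lanczosProj K ι L = L := by
  obtain ⟨hanti, hcyc⟩ := hL
  funext i j k
  rw [lanczosProj_apply]
  linear_combination (hanti j k i - hanti i j k - hcyc i j k) / 3

theorem isProj_lanczosProj [CharZero K] : IsProj (lanczosTensors K ι) (lanczosProj K ι) :=
  ⟨lanczosProj_mem, fun _ => lanczosProj_eq_self⟩

variable [Fintype ι]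

theorem trace_lanczosProj [DecidableEq ι] :
    trace K _ (lanczosProj K ι) = ((Fintype.card ι : K) ^ 3 - Fintype.card ι) / 3 := by
  have card_fix_swap : #{p : ι × ι × ι | (p.2.1, p.1, p.2.2) = p} = Fintype.card ι ^ 2 := by
    simp only [card_filter, Fintype.sum_prod_type]
    simp [Prod.ext_iff, eq_comm, sq]
  have card_fix_cycle : #{p : ι × ι × ι | (p.2.2, p.1, p.2.1) = p} = Fintype.card ι := by
    simp only [card_filter, Fintype.sum_prod_type]
    simp [Prod.ext_iff, ite_and]
  have card_fix_reverse : #{p : ι × ι × ι | (p.2.2, p.2.1, p.1) = p} = Fintype.card ι ^ 2 := by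
    simp only [card_filter, Fintype.sum_prod_type]
    simp [Prod.ext_iff, sq, eq_comm]
  rw [lanczosProj, trace_conj', map_smul, map_add, map_sub, map_sub, trace_one, trace_funLeft,
    trace_funLeft, trace_funLeft, card_fix_swap, card_fix_cycle, card_fix_reverse]
  simp only [finrank_fintype_fun_eq_card, Fintype.card_prod, Nat.cast_mul, Nat.cast_pow,
    smul_eq_mul]
  ring

theorem finrank_lanczosTensors [CharZero K] :
    finrank K (lanczosTensors K ι) = Fintype.card ι * (Fintype.card ι ^ 2 - 1) / 3 := by
  classical
  have hrank : (finrank K (lanczosTensors K ι) : K) * 3 =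
      (Fintype.card ι ^ 3 - Fintype.card ι : ℕ) := by
    rw [← isProj_lanczosProj.trace, trace_lanczosProj,
      Nat.cast_sub (Nat.le_self_pow three_ne_zero _)]
    push_cast
    ring
  rw [← Nat.cast_ofNat, ← Nat.cast_mul, Nat.cast_inj] at hrank
  rw [Nat.mul_sub_one, ← pow_succ', ← hrank, Nat.mul_div_cancel _ three_pos]

end Lanczos

theorem stmt_4_general (n : ℕ)
    (S : Submodule ℝ (Fin n → Fin n → Fin n → ℝ))
    (hS : ∀ L, L ∈ S ↔
      ((∀ i j k, L i j k + L j i k = 0) ∧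
        (∀ i j k, L i j k + L j k i + L k i j = 0))) :
    Module.finrank ℝ S = n * (n ^ 2 - 1) / 3 ∧
      (n = 4 → Module.finrank ℝ S = 20) := by
  obtain rfl : S = lanczosTensors ℝ (Fin n) := Submodule.ext hS
  have hrank := finrank_lanczosTensors (K := ℝ) (ι := Fin n)
  rw [Fintype.card_fin] at hrank
  exact ⟨hrank, fun h4 => by rw [hrank, h4]; norm_num⟩

theorem stmt_4 (n : ℕ) (hn : 2 ≤ n)
    (S : Submodule ℝ (Fin n → Fin n → Fin n → ℝ))
    (hS : ∀ L, L ∈ S ↔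
      ((∀ i j k, L i j k + L j i k = 0) ∧
        (∀ i j k, L i j k + L j k i + L k i j = 0))) :
    Module.finrank ℝ S = n * (n ^ 2 - 1) / 3 ∧
      (n = 4 → Module.finrank ℝ S = 20) :=
  stmt_4_general n S hS
end

section
/- For n ≥ 3, the vector space of 'Weyl candidates', i.e. 4-tensors W on Fin n satisfying W_{kl,ij} = −W_{lk,ij} = −W_{kl,ji} = W_{ij,kl}, the first Bianchi identity W_{kl,ij} + W_{ki,jl} + W_{kj,li} = 0, and the trace condition Σ_r W_{rl,rj} = 0, has dimension n²(n²−1)/12 − n(n+1)/2; in particular for n = 4 the dimension is 10. -/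
/-!
A tensor that is antisymmetric in each index pair and symmetric under exchange of the two pairs
is the same thing as a symmetric matrix indexed by increasing pairs `k < l`, so these tensors form
a space of dimension `C(C(n,2) + 1, 2)`. The Bianchi map `W ↦ W_{klij} + W_{kijl} + W_{kjli}`
sends this space onto the totally antisymmetric tensors (on which it is multiplication by `3`),
whose dimension is `C(n,4)`; so the curvature tensors have dimension
`C(C(n,2) + 1, 2) - C(n,4) = n²(n²-1)/12`. For `n ≥ 3` the Ricci contraction maps the curvature
tensors onto the symmetric matrices, already on Kulkarni–Nomizu products `h ⊙ δ`, and the Weyl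
candidates are its kernel.
-/

open Module

theorem Submodule.finrank_map_add_finrank_inf_ker {K V W : Type*} [DivisionRing K]
    [AddCommGroup V] [Module K V] [AddCommGroup W] [Module K W] [FiniteDimensional K V]
    (p : Submodule K V) (f : V →ₗ[K] W) :
    finrank K (p.map f) + finrank K (p ⊓ LinearMap.ker f : Submodule K V) = finrank K p := by
  have hker : (p ⊓ LinearMap.ker f).comap p.subtype = (LinearMap.ker f).comap p.subtype := by
    rw [comap_inf, comap_subtype_self, top_inf_eq]
  rw [← LinearMap.range_domRestrict, ← (f.domRestrict p).finrank_range_add_finrank_ker,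
    LinearMap.ker_domRestrict, ← hker, (comapSubtypeEquivOfLe inf_le_left).finrank_eq]

namespace Matrix

variable (R α : Type*) [CommRing R]

def symmetricSubmodule : Submodule R (Matrix α α R) where
  carrier := {A | A.IsSymm}
  add_mem' := IsSymm.add
  zero_mem' := isSymm_zero
  smul_mem' c _ h := h.smul c

def sym2EquivSymmetricSubmodule : (Sym2 α → R) ≃ₗ[R] symmetricSubmodule R α where
  toFun g := ⟨of fun a b => g s(a, b), IsSymm.ext fun a b => congrArg g Sym2.eq_swap⟩
  invFun A := Sym2.lift ⟨A.1, fun a b => (A.2.apply a b).symm⟩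
  map_add' _ _ := rfl
  map_smul' _ _ := rfl
  left_inv g := by ext z; induction z using Sym2.ind; rfl
  right_inv _ := rfl

theorem finrank_symmetricSubmodule [StrongRankCondition R] [Fintype α] :
    finrank R (symmetricSubmodule R α) = (Fintype.card α + 1).choose 2 := by
  rw [← (sym2EquivSymmetricSubmodule R α).finrank_eq, finrank_pi, Sym2.card]

end Matrix

theorem Fintype.card_orderEmbedding_fin {ι : Type*} [Fintype ι] [LinearOrder ι] (k : ℕ) :
    Fintype.card (Fin k ↪o ι) = (Fintype.card ι).choose k := by
  rw [Fintype.card_congr Set.powersetCard.ofFinEmbEquiv, ← Nat.card_eq_fintype_card,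
    Set.powersetCard.card, Nat.card_eq_fintype_card]

theorem Nat.choose_two_add_one_choose_two (n : ℕ) :
    (n.choose 2 + 1).choose 2 = n.choose 4 + n ^ 2 * (n ^ 2 - 1) / 12 := by
  suffices 12 * (n.choose 2 + 1).choose 2 = 12 * n.choose 4 + n ^ 2 * (n ^ 2 - 1) by omega
  rcases n.eq_zero_or_pos with rfl | hn
  · rfl
  have h4 : (n.choose 4 : ℚ) = n * (n - 1) * (n - 2) * (n - 3) / 24 := by
    rw [Nat.cast_choose_eq_descPochhammer_div]
    simp [descPochhammer_succ_right, Nat.factorial]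
  have : 1 ≤ n ^ 2 := Nat.one_le_pow _ _ hn
  qify [this]
  rw [Nat.cast_choose_two, Nat.cast_add_one, Nat.cast_choose_two, h4]
  ring

theorem eq_zero_of_antisymm_of_lt {ι : Type*} [LinearOrder ι] {f : ι → ι → ℝ}
    (hf : ∀ a b, f a b = -f b a) (h : ∀ a b, a < b → f a b = 0) (a b : ι) : f a b = 0 := by
  rcases lt_trichotomy a b with hab | rfl | hab
  · exact h a b hab
  · linarith [hf a a]
  · rw [hf, h b a hab, neg_zero]

abbrev Tensor4 (ι : Type*) := ι → ι → ι → ι → ℝ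

namespace Tensor4

section Definitions

variable (ι : Type*)

def pairSymmetric : Submodule ℝ (Tensor4 ι) where
  carrier := {W | ∀ k l i j, W k l i j = -W l k i j ∧ W k l i j = -W k l j i ∧
    W k l i j = W i j k l}
  add_mem' {W V} hW hV k l i j := by
    obtain ⟨hW₁, hW₂, hW₃⟩ := hW k l i j
    obtain ⟨hV₁, hV₂, hV₃⟩ := hV k l i j
    simp only [Pi.add_apply]
    exact ⟨by rw [hW₁, hV₁, neg_add], by rw [hW₂, hV₂, neg_add], by rw [hW₃, hV₃]⟩
  zero_mem' _ _ _ _ := by simp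
  smul_mem' c W hW k l i j := by
    obtain ⟨hW₁, hW₂, hW₃⟩ := hW k l i j
    simp only [Pi.smul_apply, smul_eq_mul]
    exact ⟨by rw [hW₁, mul_neg], by rw [hW₂, mul_neg], by rw [hW₃]⟩

def bianchiMap : Tensor4 ι →ₗ[ℝ] Tensor4 ι where
  toFun W k l i j := W k l i j + W k i j l + W k j l i
  map_add' W V := by ext; simp only [Pi.add_apply]; ring
  map_smul' c W := by ext; simp only [Pi.smul_apply, smul_eq_mul, RingHom.id_apply]; ring

def curvatureTensors : Submodule ℝ (Tensor4 ι) :=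
  pairSymmetric ι ⊓ LinearMap.ker (bianchiMap ι)

variable {ι} in
def evalTuple (T : Tensor4 ι) (v : Fin 4 → ι) : ℝ := T (v 0) (v 1) (v 2) (v 3)

def alternating : Submodule ℝ (Tensor4 ι) where
  carrier := {T | ∀ (σ : Equiv.Perm (Fin 4)) (v : Fin 4 → ι),
    evalTuple T (v ∘ σ) = Equiv.Perm.sign σ • evalTuple T v}
  add_mem' {T V} hT hV σ v := by
    change evalTuple T (v ∘ σ) + evalTuple V (v ∘ σ) = _ • (evalTuple T v + evalTuple V v)
    rw [hT, hV, smul_add]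
  zero_mem' _ _ := (smul_zero _).symm
  smul_mem' c T hT σ v := by
    change c * evalTuple T (v ∘ σ) = _ • (c * evalTuple T v)
    rw [hT, mul_smul_comm]

variable [Fintype ι]

def ricciMap : Tensor4 ι →ₗ[ℝ] Matrix ι ι ℝ where
  toFun W := Matrix.of fun l j => ∑ r, W r l r j
  map_add' W V := by ext; simp [Finset.sum_add_distrib]
  map_smul' c W := by ext; simp [Finset.mul_sum]

def weylTensors : Submodule ℝ (Tensor4 ι) :=
  curvatureTensors ι ⊓ LinearMap.ker (ricciMap ι)

end Definitions

section PairSymmetric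

variable {ι : Type*} [LinearOrder ι]

variable (ι) in
abbrev IncreasingPair := {p : ι × ι // p.1 < p.2}

theorem card_increasingPair [Fintype ι] :
    Fintype.card (IncreasingPair ι) = (Fintype.card ι).choose 2 := by
  rw [← Fintype.card_orderEmbedding_fin]
  exact Fintype.card_congr
    { toFun p := OrderEmbedding.ofStrictMono ![p.1.1, p.1.2] (by simp [p.2])
      invFun u := ⟨(u 0, u 1), u.strictMono (by decide)⟩
      left_inv _ := rfl
      right_inv u := by ext i; fin_cases i <;> rfl }

variable (ι) in
def pairSymmetricRestrict :
    pairSymmetric ι →ₗ[ℝ] Matrix.symmetricSubmodule ℝ (IncreasingPair ι) where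
  toFun W := ⟨Matrix.of fun p q => W.1 p.1.1 p.1.2 q.1.1 q.1.2,
    Matrix.IsSymm.ext fun _ _ => ((W.2 _ _ _ _).2.2).symm⟩
  map_add' _ _ := rfl
  map_smul' _ _ := rfl

theorem pairSymmetricRestrict_injective : Function.Injective (pairSymmetricRestrict ι) := by
  rw [← LinearMap.ker_eq_bot, LinearMap.ker_eq_bot']
  rintro ⟨W, hW⟩ h
  have hW0 : ∀ k l i j, k < l → i < j → W k l i j = 0 := fun k l i j hkl hij =>
    congrFun₂ (congrArg Subtype.val h) ⟨(k, l), hkl⟩ ⟨(i, j), hij⟩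
  ext k l i j
  refine eq_zero_of_antisymm_of_lt (fun a b => (hW a b i j).1) (fun a b hab => ?_) k l
  exact eq_zero_of_antisymm_of_lt (fun c d => (hW a b c d).2.1) (hW0 a b · · hab) i j

theorem pairSymmetricRestrict_surjective : Function.Surjective (pairSymmetricRestrict ι) := by
  rintro ⟨M, hM⟩
  let M' : Tensor4 ι := fun k l i j =>
    if h : k < l ∧ i < j then M ⟨(k, l), h.1⟩ ⟨(i, j), h.2⟩ else 0
  have hM' : ∀ k l i j, M' k l i j = M' i j k l := by
    intro k l i j
    by_cases h : k < l ∧ i < j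
    · simp only [M', dif_pos h, dif_pos (And.symm h)]
      exact hM.apply _ _
    · simp only [M', dif_neg h, dif_neg (mt And.symm h)]
  let W : Tensor4 ι := fun k l i j => M' k l i j - M' l k i j - M' k l j i + M' l k j i
  have hW : W ∈ pairSymmetric ι := fun k l i j =>
    ⟨by ring, by ring, by simp only [W, hM' k l i j, hM' l k i j, hM' k l j i, hM' l k j i]; ring⟩
  refine ⟨⟨W, hW⟩, Subtype.ext <| Matrix.ext fun p q => ?_⟩
  change W p.1.1 p.1.2 q.1.1 q.1.2 = M p q
  simp [W, M', p.2, q.2, p.2.asymm, q.2.asymm]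

end PairSymmetric

section Alternating

variable {ι : Type*} {T : Tensor4 ι}

def ofTuple (F : (Fin 4 → ι) → ℝ) : Tensor4 ι := fun k l i j => F ![k, l, i, j]

theorem evalTuple_ofTuple (F : (Fin 4 → ι) → ℝ) (v : Fin 4 → ι) :
    evalTuple (ofTuple F) v = F v :=
  congrArg F (by ext a; fin_cases a <;> rfl)

theorem mem_alternating_of_antisymm
    (h₀ : ∀ k l i j, T k l i j = -T l k i j) (h₁ : ∀ k l i j, T k l i j = -T k i l j)
    (h₂ : ∀ k l i j, T k l i j = -T k l j i) : T ∈ alternating ι := by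
  intro σ
  have hσ : σ ∈ Submonoid.closure (Set.range fun a : Fin 3 => Equiv.swap a.castSucc a.succ) := by
    rw [Equiv.Perm.mclosure_swap_castSucc_succ]
    trivial
  induction hσ using Submonoid.closure_induction with
  | mem _ h =>
    obtain ⟨a, rfl⟩ := h
    intro v
    rw [Equiv.Perm.sign_swap (Fin.castSucc_lt_succ (i := a)).ne, Units.neg_smul, one_smul]
    fin_cases a
    · exact h₀ _ _ _ _
    · exact h₁ _ _ _ _
    · exact h₂ _ _ _ _
  | one =>
    intro v
    rw [Equiv.Perm.sign_one, one_smul]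
    rfl
  | mul σ τ _ _ hσ hτ =>
    intro v
    rw [Equiv.Perm.sign_mul, mul_comm, mul_smul, ← hσ, ← hτ]
    rfl

theorem evalTuple_comp_swap (hT : T ∈ alternating ι) (v : Fin 4 → ι) {a b : Fin 4}
    (hab : a ≠ b) : evalTuple T (v ∘ Equiv.swap a b) = -evalTuple T v := by
  rw [hT, Equiv.Perm.sign_swap hab, Units.neg_smul, one_smul]

theorem evalTuple_comp_of_sign_eq_one (hT : T ∈ alternating ι) (v : Fin 4 → ι)
    {σ : Equiv.Perm (Fin 4)} (hσ : Equiv.Perm.sign σ = 1) :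
    evalTuple T (v ∘ σ) = evalTuple T v := by
  rw [hT, hσ, one_smul]

theorem alternating_le_pairSymmetric : alternating ι ≤ pairSymmetric ι := by
  intro T hT k l i j
  have h₀ : T l k i j = -T k l i j :=
    evalTuple_comp_swap hT ![k, l, i, j] (a := 0) (b := 1) (by decide)
  have h₁ : T k l j i = -T k l i j :=
    evalTuple_comp_swap hT ![k, l, i, j] (a := 2) (b := 3) (by decide)
  have h₂ : T i j k l = T k l i j := by
    refine evalTuple_comp_of_sign_eq_one hT ![k, l, i, j]
      (σ := Equiv.swap 0 2 * Equiv.swap 1 3) ?_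
    decide
  exact ⟨by linarith, by linarith, h₂.symm⟩

theorem bianchiMap_of_mem_alternating (hT : T ∈ alternating ι) :
    bianchiMap ι T = (3 : ℝ) • T := by
  ext k l i j
  have h₁ : T k i j l = T k l i j := by
    refine evalTuple_comp_of_sign_eq_one hT ![k, l, i, j]
      (σ := Equiv.swap 1 2 * Equiv.swap 2 3) ?_
    decide
  have h₂ : T k j l i = T k l i j := by
    refine evalTuple_comp_of_sign_eq_one hT ![k, l, i, j]
      (σ := Equiv.swap 1 3 * Equiv.swap 2 3) ?_
    decide
  change T k l i j + T k i j l + T k j l i = 3 * T k l i j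
  rw [h₁, h₂]
  ring

theorem map_bianchiMap_pairSymmetric_le :
    (pairSymmetric ι).map (bianchiMap ι) ≤ alternating ι := by
  rintro _ ⟨W, hW, rfl⟩
  have h₀ : ∀ a b c d, W a b c d = -W b a c d := fun a b c d => (hW a b c d).1
  have h₁ : ∀ a b c d, W a b c d = -W a b d c := fun a b c d => (hW a b c d).2.1
  have h₂ : ∀ a b c d, W a b c d = W c d a b := fun a b c d => (hW a b c d).2.2
  refine mem_alternating_of_antisymm (fun k l i j => ?_) (fun k l i j => ?_) (fun k l i j => ?_)
  all_goals change W k _ _ _ + W k _ _ _ + W k _ _ _ = -(W _ _ _ _ + W _ _ _ _ + W _ _ _ _)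
  · rw [h₂ l i j k, h₀ j k l i, h₂ l j k i, h₁ k i l j, h₀ l k i j]
    ring
  · rw [h₁ k i l j, h₁ k l j i, h₁ k j i l]
    ring
  · rw [h₁ k l j i, h₁ k j i l, h₁ k i l j]
    ring

theorem map_bianchiMap_pairSymmetric : (pairSymmetric ι).map (bianchiMap ι) = alternating ι := by
  refine le_antisymm map_bianchiMap_pairSymmetric_le fun T hT => ⟨(3 : ℝ)⁻¹ • T,
    (pairSymmetric ι).smul_mem _ (alternating_le_pairSymmetric hT), ?_⟩
  rw [map_smul, bianchiMap_of_mem_alternating hT, inv_smul_smul₀ three_ne_zero]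

theorem evalTuple_eq_zero_of_not_injective (hT : T ∈ alternating ι) {v : Fin 4 → ι}
    (hv : ¬ Function.Injective v) : evalTuple T v = 0 := by
  obtain ⟨a, b, hab, hne⟩ := Function.not_injective_iff.mp hv
  have h := evalTuple_comp_swap hT v hne
  rw [Equiv.comp_swap_eq_update, hab, Function.update_eq_self, ← hab, Function.update_eq_self] at h
  linarith

variable [LinearOrder ι]

theorem evalTuple_eq_zero_of_forall_strictMono (hT : T ∈ alternating ι)
    (h : ∀ u : Fin 4 → ι, StrictMono u → evalTuple T u = 0) (v : Fin 4 → ι) :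
    evalTuple T v = 0 := by
  by_cases hv : Function.Injective v
  · let σ := Tuple.sort v
    have hσ : StrictMono (v ∘ σ) :=
      (Tuple.monotone_sort v).strictMono_of_injective (hv.comp σ.injective)
    rw [← one_smul ℤˣ (evalTuple T v), ← Int.units_mul_self (Equiv.Perm.sign σ), mul_smul, ← hT,
      h _ hσ, smul_zero]
  · exact evalTuple_eq_zero_of_not_injective hT hv

variable (ι) in
def alternatingRestrict : alternating ι →ₗ[ℝ] ((Fin 4 ↪o ι) → ℝ) where
  toFun T u := evalTuple T.1 u
  map_add' _ _ := rfl
  map_smul' _ _ := rfl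

theorem alternatingRestrict_injective : Function.Injective (alternatingRestrict ι) := by
  rw [← LinearMap.ker_eq_bot, LinearMap.ker_eq_bot']
  rintro ⟨T, hT⟩ h
  have hT0 := evalTuple_eq_zero_of_forall_strictMono hT fun u hu =>
    congrFun h (OrderEmbedding.ofStrictMono u hu)
  ext k l i j
  exact hT0 ![k, l, i, j]

/-- The preimage of `g` is the antisymmetrization of the function equal to `g` on increasing
tuples and to `0` elsewhere: on an increasing tuple only the term `σ = 1` survives. -/
theorem alternatingRestrict_surjective : Function.Surjective (alternatingRestrict ι) := by
  intro g
  let G : (Fin 4 → ι) → ℝ := fun v => if h : StrictMono v then g (.ofStrictMono v h) else 0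
  let F : (Fin 4 → ι) → ℝ := fun v => ∑ σ : Equiv.Perm (Fin 4), Equiv.Perm.sign σ • G (v ∘ σ)
  have hF : ofTuple F ∈ alternating ι := by
    intro τ v
    simp only [evalTuple_ofTuple, F, Finset.smul_sum]
    refine Fintype.sum_equiv (Equiv.mulLeft τ) _ _ fun σ => ?_
    rw [Equiv.coe_mulLeft, Equiv.Perm.sign_mul, smul_smul, ← mul_assoc, Int.units_mul_self,
      one_mul]
    rfl
  refine ⟨⟨ofTuple F, hF⟩, funext fun u => ?_⟩
  change evalTuple (ofTuple F) u = g u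
  rw [evalTuple_ofTuple]
  refine (Finset.sum_eq_single 1 ?_ ?_).trans ?_
  · intro σ _ hσ
    suffices ¬ StrictMono (u ∘ σ) by simp [G, this]
    exact fun h => hσ ((Equiv.Perm.monotone_iff σ).mp
      (fun a b hab => u.le_iff_le.mp (h.monotone hab)))
  · exact fun h => absurd (Finset.mem_univ 1) h
  · simp only [G, Equiv.Perm.sign_one, one_smul, Equiv.Perm.coe_one, Function.comp_id,
      dif_pos u.strictMono]
    rfl

end Alternating

section KulkarniNomizu

variable {ι : Type*}

def kulkarniNomizu (h g : Matrix ι ι ℝ) : Tensor4 ι := fun k l i j =>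
  h k i * g l j + h l j * g k i - h k j * g l i - h l i * g k j

theorem kulkarniNomizu_mem_curvatureTensors {h g : Matrix ι ι ℝ} (hh : h.IsSymm)
    (hg : g.IsSymm) : kulkarniNomizu h g ∈ curvatureTensors ι := by
  refine ⟨fun k l i j => ⟨by simp only [kulkarniNomizu]; ring, by simp only [kulkarniNomizu]; ring,
    ?_⟩, ?_⟩
  · simp only [kulkarniNomizu]
    rw [hh.apply i k, hh.apply j l, hh.apply i l, hh.apply j k, hg.apply i k, hg.apply j l,
      hg.apply i l, hg.apply j k]
    ring
  · ext k l i j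
    change kulkarniNomizu h g k l i j + kulkarniNomizu h g k i j l +
      kulkarniNomizu h g k j l i = 0
    simp only [kulkarniNomizu]
    rw [hh.apply l j, hh.apply i l, hh.apply j i, hg.apply l j, hg.apply i l, hg.apply j i]
    ring

theorem ricciMap_kulkarniNomizu_one [Fintype ι] [DecidableEq ι] (h : Matrix ι ι ℝ) :
    ricciMap ι (kulkarniNomizu h 1) = ((Fintype.card ι : ℝ) - 2) • h + h.trace • 1 := by
  ext l j
  change ∑ r, kulkarniNomizu h 1 r l r j = _
  simp only [kulkarniNomizu, Matrix.one_apply, mul_ite, mul_one, mul_zero,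
    Finset.sum_sub_distrib, Finset.sum_add_distrib, Finset.sum_ite_irrel, Finset.sum_const_zero,
    Finset.sum_const, Finset.card_univ, nsmul_eq_mul, Finset.sum_ite_eq, Finset.sum_ite_eq',
    Finset.mem_univ, if_true, Matrix.trace, Matrix.diag_apply, Matrix.add_apply,
    Matrix.smul_apply, smul_eq_mul]
  ring

end KulkarniNomizu

section Dimensions

variable {ι : Type*} [Fintype ι]

theorem finrank_pairSymmetric :
    finrank ℝ (pairSymmetric ι) = ((Fintype.card ι).choose 2 + 1).choose 2 := by
  let _ : LinearOrder ι := LinearOrder.lift' _ (Fintype.equivFin ι).injective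
  rw [(LinearEquiv.ofBijective _ ⟨pairSymmetricRestrict_injective,
    pairSymmetricRestrict_surjective⟩).finrank_eq, Matrix.finrank_symmetricSubmodule,
    card_increasingPair]

theorem finrank_alternating : finrank ℝ (alternating ι) = (Fintype.card ι).choose 4 := by
  let _ : LinearOrder ι := LinearOrder.lift' _ (Fintype.equivFin ι).injective
  rw [(LinearEquiv.ofBijective _ ⟨alternatingRestrict_injective,
    alternatingRestrict_surjective⟩).finrank_eq, finrank_pi, Fintype.card_orderEmbedding_fin]

theorem finrank_curvatureTensors :
    finrank ℝ (curvatureTensors ι) = Fintype.card ι ^ 2 * (Fintype.card ι ^ 2 - 1) / 12 := by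
  have h := (pairSymmetric ι).finrank_map_add_finrank_inf_ker (bianchiMap ι)
  rw [map_bianchiMap_pairSymmetric, finrank_alternating, finrank_pairSymmetric,
    Nat.choose_two_add_one_choose_two] at h
  unfold curvatureTensors
  omega

/-- `Ric (h ⊙ 1) = (n - 2) h + (tr h) 1`, so `h = (s - c 1) / (n - 2)` with
`c = tr s / (2 (n - 1))` (then `tr h = c`) has Ricci contraction `s`. -/
theorem map_ricciMap_curvatureTensors (hn : 3 ≤ Fintype.card ι) :
    (curvatureTensors ι).map (ricciMap ι) = Matrix.symmetricSubmodule ℝ ι := by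
  classical
  refine le_antisymm ?_ fun s hs => ?_
  · rintro _ ⟨W, ⟨hW, -⟩, rfl⟩
    exact Matrix.IsSymm.ext fun l j => Finset.sum_congr rfl fun r _ => (hW r j r l).2.2
  have hn : (3 : ℝ) ≤ Fintype.card ι := by exact_mod_cast hn
  set n : ℝ := (Fintype.card ι : ℝ) with hn_def
  set c := s.trace / (2 * (n - 1)) with hc
  refine ⟨kulkarniNomizu ((n - 2)⁻¹ • (s - c • 1)) 1, kulkarniNomizu_mem_curvatureTensors
    ((hs.sub (Matrix.isSymm_one.smul c)).smul _) Matrix.isSymm_one, ?_⟩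
  have htrace : ((n - 2)⁻¹ • (s - c • 1)).trace = c := by
    rw [Matrix.trace_smul, Matrix.trace_sub, Matrix.trace_smul, Matrix.trace_one, smul_eq_mul,
      smul_eq_mul, ← hn_def, hc]
    have : n - 1 ≠ 0 := by linarith
    have : n - 2 ≠ 0 := by linarith
    field_simp
    ring
  rw [ricciMap_kulkarniNomizu_one, htrace, smul_inv_smul₀ (by linarith), sub_add_cancel]

theorem finrank_weylTensors (hn : 3 ≤ Fintype.card ι) :
    finrank ℝ (weylTensors ι) = Fintype.card ι ^ 2 * (Fintype.card ι ^ 2 - 1) / 12 -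
      Fintype.card ι * (Fintype.card ι + 1) / 2 := by
  have h := (curvatureTensors ι).finrank_map_add_finrank_inf_ker (ricciMap ι)
  rw [map_ricciMap_curvatureTensors hn, Matrix.finrank_symmetricSubmodule,
    finrank_curvatureTensors, Nat.choose_two_right, Nat.add_sub_cancel, mul_comm] at h
  unfold weylTensors
  omega

theorem mem_weylTensors_iff {W : Tensor4 ι} : W ∈ weylTensors ι ↔
    ((∀ k l i j, W k l i j = -W l k i j ∧ W k l i j = -W k l j i ∧ W k l i j = W i j k l) ∧
      (∀ k l i j, W k l i j + W k i j l + W k j l i = 0) ∧ ∀ l j, ∑ r, W r l r j = 0) := by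
  simp only [weylTensors, curvatureTensors, Submodule.mem_inf, LinearMap.mem_ker, and_assoc,
    funext_iff, ← Matrix.ext_iff]
  rfl

end Dimensions

end Tensor4

theorem stmt_5 (n : ℕ) (hn : 3 ≤ n)
    (S : Submodule ℝ (Fin n → Fin n → Fin n → Fin n → ℝ))
    (hS : ∀ W, W ∈ S ↔
      ((∀ k l i j, W k l i j = - W l k i j ∧ W k l i j = - W k l j i ∧
          W k l i j = W i j k l) ∧
        (∀ k l i j, W k l i j + W k i j l + W k j l i = 0) ∧
        (∀ l j, ∑ r, W r l r j = 0))) :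
    Module.finrank ℝ S = n ^ 2 * (n ^ 2 - 1) / 12 - n * (n + 1) / 2 ∧
      (n = 4 → Module.finrank ℝ S = 10) := by
  obtain rfl : S = Tensor4.weylTensors (Fin n) :=
    SetLike.ext fun W => (hS W).trans Tensor4.mem_weylTensors_iff.symm
  have h := Tensor4.finrank_weylTensors (ι := Fin n) (by rwa [Fintype.card_fin])
  rw [Fintype.card_fin] at h
  exact ⟨h, by rintro rfl; exact h⟩
end

section
/- There exists a smooth 3-tensor field L on ℝ⁴ satisfying L_{ij,k} + L_{ji,k} = 0 and L_{ij,k} + L_{jk,i} + L_{ki,j} = 0 such that the tensor R_{kl,ij} := ∂_j L_{kl,i} − ∂_i L_{kl,j} + ∂_l L_{ij,k} − ∂_k L_{ij,l} does NOT satisfy the second Bianchi identity, i.e. ∂_r R_{kl,ij} + ∂_i R_{kl,jr} + ∂_j R_{kl,ri} ≠ 0 for some choice of indices and some point. -/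
/-- Partial derivative of a scalar function on `ℝⁿ` in the `i`-th coordinate direction. -/
noncomputable def pd {n : ℕ} (i : Fin n) (f : (Fin n → ℝ) → ℝ) : (Fin n → ℝ) → ℝ :=
  fun x => fderiv ℝ f x (Pi.single i 1)

/-- The constant tensor: antisymmetric in first two slots, cyclic-sum zero. -/
noncomputable def Tt (i j k : Fin 4) : ℝ :=
  (if i = 0 ∧ j = 1 ∧ k = 1 then 1 else 0) - (if i = 1 ∧ j = 0 ∧ k = 1 then 1 else 0)

lemma pd_sq (i : Fin 4) (c : ℝ) (x : Fin 4 → ℝ) :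
    pd i (fun y => y 2 * y 2 * c) x = 2 * x 2 * ((Pi.single i 1 : Fin 4 → ℝ) 2) * c := by
  have hP : HasFDerivAt (fun y : Fin 4 → ℝ => y 2)
      (ContinuousLinearMap.proj 2 : (Fin 4 → ℝ) →L[ℝ] ℝ) x :=
    hasFDerivAt_apply 2 x
  have h : HasFDerivAt (fun y : Fin 4 → ℝ => y 2 * y 2 * c) _ x := (hP.mul hP).mul_const c
  rw [pd, h.fderiv]
  simp
  ring

lemma pd_lin (r : Fin 4) (c : ℝ) (x : Fin 4 → ℝ) :
    pd r (fun y => y 2 * c) x = (Pi.single r 1 : Fin 4 → ℝ) 2 * c := by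
  have hP : HasFDerivAt (fun y : Fin 4 → ℝ => y 2)
      (ContinuousLinearMap.proj 2 : (Fin 4 → ℝ) →L[ℝ] ℝ) x :=
    hasFDerivAt_apply 2 x
  have h := hP.mul_const c
  rw [pd, h.fderiv]
  simp [mul_comm]

lemma pd_zero (r : Fin 4) (x : Fin 4 → ℝ) : pd r (fun _ => (0:ℝ)) x = 0 := by
  simp [pd]

theorem stmt_8 :
    ∃ L : (Fin 4 → ℝ) → Fin 4 → Fin 4 → Fin 4 → ℝ,
      (∀ i j k, ContDiff ℝ (⊤ : ℕ∞) (fun x => L x i j k)) ∧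
      (∀ x i j k, L x i j k + L x j i k = 0) ∧
      (∀ x i j k, L x i j k + L x j k i + L x k i j = 0) ∧
      (let R : Fin 4 → Fin 4 → Fin 4 → Fin 4 → (Fin 4 → ℝ) → ℝ :=
        fun k l i j x =>
          pd j (fun y => L y k l i) x - pd i (fun y => L y k l j) x
            + pd l (fun y => L y i j k) x - pd k (fun y => L y i j l) x
       ∃ k l i j r x,
         pd r (R k l i j) x + pd i (R k l j r) x + pd j (R k l r i) x ≠ 0) := by
  refine ⟨fun x i j k => x 2 * x 2 * Tt i j k, ?_, ?_, ?_, ?_⟩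
  · intro i j k
    have h2 : ContDiff ℝ (⊤ : ℕ∞) (fun x : Fin 4 → ℝ => x 2) := contDiff_apply ℝ ℝ 2
    exact (h2.mul h2).mul contDiff_const
  · intro x i j k
    have : Tt i j k + Tt j i k = 0 := by
      fin_cases i <;> fin_cases j <;> fin_cases k <;> norm_num [Tt, Fin.ext_iff]
    calc x 2 * x 2 * Tt i j k + x 2 * x 2 * Tt j i k
        = x 2 * x 2 * (Tt i j k + Tt j i k) := by ring
      _ = 0 := by rw [this]; ring
  · intro x i j k
    have : Tt i j k + Tt j k i + Tt k i j = 0 := by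
      fin_cases i <;> fin_cases j <;> fin_cases k <;> norm_num [Tt, Fin.ext_iff]
    calc x 2 * x 2 * Tt i j k + x 2 * x 2 * Tt j k i + x 2 * x 2 * Tt k i j
        = x 2 * x 2 * (Tt i j k + Tt j k i + Tt k i j) := by ring
      _ = 0 := by rw [this]; ring
  · dsimp only
    refine ⟨1, 2, 0, 1, 2, (fun _ => 0), ?_⟩
    have e1 : (fun x => pd 1 (fun y => y 2 * y 2 * Tt 1 2 0) x
          - pd 0 (fun y => y 2 * y 2 * Tt 1 2 1) x
          + pd 2 (fun y => y 2 * y 2 * Tt 0 1 1) x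
          - pd 1 (fun y => y 2 * y 2 * Tt 0 1 2) x)
        = fun x : Fin 4 → ℝ => x 2 * 2 := by
      funext x
      simp only [pd_sq]; norm_num [Tt, Pi.single_apply, Fin.ext_iff]
      ring
    have e2 : (fun x => pd 2 (fun y => y 2 * y 2 * Tt 1 2 1) x
          - pd 1 (fun y => y 2 * y 2 * Tt 1 2 2) x
          + pd 2 (fun y => y 2 * y 2 * Tt 1 2 1) x
          - pd 1 (fun y => y 2 * y 2 * Tt 1 2 2) x)
        = fun _ : Fin 4 → ℝ => (0:ℝ) := by
      funext x
      simp only [pd_sq]; norm_num [Tt, Pi.single_apply, Fin.ext_iff]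
    have e3 : (fun x => pd 0 (fun y => y 2 * y 2 * Tt 1 2 2) x
          - pd 2 (fun y => y 2 * y 2 * Tt 1 2 0) x
          + pd 2 (fun y => y 2 * y 2 * Tt 2 0 1) x
          - pd 1 (fun y => y 2 * y 2 * Tt 2 0 2) x)
        = fun _ : Fin 4 → ℝ => (0:ℝ) := by
      funext x
      simp only [pd_sq]; norm_num [Tt, Pi.single_apply, Fin.ext_iff]
    rw [e1, e2, e3, pd_lin, pd_zero, pd_zero]
    norm_num
end

section
/- Let α be a smooth 4-tensor field on ℝⁿ with the symmetries α^{kl,ij} = −α^{lk,ij} = −α^{kl,ji} = α^{ij,kl}, and define σ^{ij} := Σ_{r,s} ∂_r∂_s α^{ir,sj}. Then σ is symmetric (σ^{ij} = σ^{ji}) and divergence-free (Σ_j ∂_j σ^{ij} = 0 for each i). (Parametrization of the Cauchy operator by the adjoint of the Riemann operator.) -/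
lemma pd_smooth {n : ℕ} (i : Fin n) {f : (Fin n → ℝ) → ℝ} (hf : ContDiff ℝ (⊤ : ℕ∞) f) :
    ContDiff ℝ (⊤ : ℕ∞) (pd i f) := by
  have h := (ContinuousLinearMap.apply ℝ ℝ (Pi.single i 1 : Fin n → ℝ)).contDiff.comp
    (hf.fderiv_right (m := ((⊤ : ℕ∞) : WithTop ℕ∞)) (by exact_mod_cast le_refl _))
  exact h

lemma pd_comm {n : ℕ} {f : (Fin n → ℝ) → ℝ} (hf : ContDiff ℝ (⊤ : ℕ∞) f) (r s : Fin n)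
    (x : Fin n → ℝ) : pd r (pd s f) x = pd s (pd r f) x := by
  have hd : DifferentiableAt ℝ (fderiv ℝ f) x :=
    ((hf.fderiv_right (m := 1) (WithTop.coe_le_coe.mpr le_top)).differentiable one_ne_zero).differentiableAt
  have key : ∀ v w : Fin n → ℝ,
      fderiv ℝ (fun y => fderiv ℝ f y v) x w = fderiv ℝ (fderiv ℝ f) x w v := by
    intro v w
    have h1 : (fun y => fderiv ℝ f y v) =
        (ContinuousLinearMap.apply ℝ ℝ v) ∘ (fderiv ℝ f) := rfl
    rw [h1, fderiv_comp x (ContinuousLinearMap.apply ℝ ℝ v).differentiableAt hd]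
    simp
  have hsymm : IsSymmSndFDerivAt ℝ f x :=
    hf.contDiffAt.isSymmSndFDerivAt (by rw [minSmoothness_of_isRCLikeNormedField]; exact WithTop.coe_le_coe.mpr le_top)
  show fderiv ℝ (fun y => fderiv ℝ f y (Pi.single s 1)) x (Pi.single r 1)
      = fderiv ℝ (fun y => fderiv ℝ f y (Pi.single r 1)) x (Pi.single s 1)
  rw [key, key]
  exact hsymm _ _

lemma pd_comm3 {n : ℕ} {f : (Fin n → ℝ) → ℝ} (hf : ContDiff ℝ (⊤ : ℕ∞) f) (a b c : Fin n)
    (x : Fin n → ℝ) : pd a (pd b (pd c f)) x = pd c (pd b (pd a f)) x := by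
  have h1 : pd b (pd c f) = pd c (pd b f) := funext fun y => pd_comm hf b c y
  have h2 : pd a (pd b f) = pd b (pd a f) := funext fun y => pd_comm hf a b y
  calc pd a (pd b (pd c f)) x = pd a (pd c (pd b f)) x := by rw [h1]
    _ = pd c (pd a (pd b f)) x := pd_comm (pd_smooth b hf) a c x
    _ = pd c (pd b (pd a f)) x := by rw [h2]

lemma pd_sum {n : ℕ} (j : Fin n) (g : Fin n → (Fin n → ℝ) → ℝ)
    (hg : ∀ p, ContDiff ℝ (⊤ : ℕ∞) (g p)) (x : Fin n → ℝ) :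
    pd j (fun y => ∑ p, g p y) x = ∑ p, pd j (g p) x := by
  show fderiv ℝ (fun y => ∑ p, g p y) x (Pi.single j 1) = _
  rw [fderiv_fun_sum (fun p _ => ((hg p).differentiable (by simp)).differentiableAt)]
  simp [pd]

lemma pd_sum2 {n : ℕ} (j : Fin n) (g : Fin n → Fin n → (Fin n → ℝ) → ℝ)
    (hg : ∀ r s, ContDiff ℝ (⊤ : ℕ∞) (g r s)) (x : Fin n → ℝ) :
    pd j (fun y => ∑ r, ∑ s, g r s y) x = ∑ r, ∑ s, pd j (g r s) x := by
  have h1 : ∀ r : Fin n, ContDiff ℝ (⊤ : ℕ∞) (fun y => ∑ s, g r s y) :=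
    fun r => ContDiff.sum (fun s _ => hg r s)
  calc pd j (fun y => ∑ r, ∑ s, g r s y) x
      = ∑ r, pd j (fun y => ∑ s, g r s y) x := pd_sum j _ h1 x
    _ = ∑ r, ∑ s, pd j (g r s) x := Finset.sum_congr rfl fun r _ => pd_sum j (g r) (hg r) x

lemma pd_neg {n : ℕ} (i : Fin n) (f : (Fin n → ℝ) → ℝ) :
    pd i (fun y => -f y) = fun x => -(pd i f x) := by
  funext x
  show fderiv ℝ (fun y => -f y) x (Pi.single i 1) = -(fderiv ℝ f x (Pi.single i 1))
  rw [fderiv_fun_neg]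
  simp

theorem stmt_13 (n : ℕ)
    (α : (Fin n → ℝ) → Fin n → Fin n → Fin n → Fin n → ℝ)
    (hsmooth : ∀ k l i j, ContDiff ℝ (⊤ : ℕ∞) (fun x => α x k l i j))
    (hsym : ∀ x k l i j, α x k l i j = - α x l k i j ∧ α x k l i j = - α x k l j i ∧
      α x k l i j = α x i j k l)
    (σ : Fin n → Fin n → (Fin n → ℝ) → ℝ)
    (hσ : ∀ i j x, σ i j x = ∑ r, ∑ s, pd r (pd s (fun y => α y i r s j)) x) :
    (∀ i j x, σ i j x = σ j i x) ∧
      (∀ i x, ∑ j, pd j (σ i j) x = 0) := by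
  constructor
  · -- symmetry
    intro i j x
    have hfun : ∀ r s : Fin n, (fun y => α y j r s i) = (fun y => α y i s r j) := by
      intro r s
      funext y
      have h1 := (hsym y j r s i).2.2
      have h2 := (hsym y s i j r).1
      have h3 := (hsym y i s j r).2.1
      linarith
    calc σ i j x = ∑ r, ∑ s, pd r (pd s (fun y => α y i r s j)) x := hσ i j x
      _ = ∑ s, ∑ r, pd r (pd s (fun y => α y i r s j)) x := Finset.sum_comm
      _ = ∑ r, ∑ s, pd s (pd r (fun y => α y i s r j)) x := rfl
      _ = ∑ r, ∑ s, pd r (pd s (fun y => α y i s r j)) x := by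
          refine Finset.sum_congr rfl fun r _ => Finset.sum_congr rfl fun s _ => ?_
          exact (pd_comm (hsmooth i s r j) r s x).symm
      _ = ∑ r, ∑ s, pd r (pd s (fun y => α y j r s i)) x := by
          refine Finset.sum_congr rfl fun r _ => Finset.sum_congr rfl fun s _ => ?_
          rw [hfun r s]
      _ = σ j i x := (hσ j i x).symm
  · -- divergence free
    intro i x
    set F : Fin n → Fin n → Fin n → ℝ :=
      fun j r s => pd j (pd r (pd s (fun y => α y i r s j))) x with hF
    have key : ∀ j, pd j (σ i j) x = ∑ r, ∑ s, F j r s := by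
      intro j
      have hσf : σ i j = fun y => ∑ r, ∑ s, pd r (pd s (fun y' => α y' i r s j)) y :=
        funext (hσ i j)
      rw [hσf]
      exact pd_sum2 j _ (fun r s => pd_smooth r (pd_smooth s (hsmooth i r s j))) x
    have hanti : ∀ j r s, F j r s = - F s r j := by
      intro j r s
      have hneg : (fun y => α y i r s j) = (fun y => -(α y i r j s)) :=
        funext fun y => (hsym y i r s j).2.1
      have step1 : F j r s = - pd j (pd r (pd s (fun y => α y i r j s))) x := by
        rw [hF]
        simp only [hneg, pd_neg]
      rw [step1, pd_comm3 (hsmooth i r j s) j r s x]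
    have hre : ∑ j, ∑ r, ∑ s, F s r j = ∑ j, ∑ r, ∑ s, F j r s := by
      calc ∑ j, ∑ r, ∑ s, F s r j
          = ∑ j, ∑ s, ∑ r, F s r j := Finset.sum_congr rfl fun j _ => Finset.sum_comm
        _ = ∑ s, ∑ j, ∑ r, F s r j := Finset.sum_comm
        _ = ∑ s, ∑ r, ∑ j, F s r j := Finset.sum_congr rfl fun s _ => Finset.sum_comm
    have hT : ∑ j, pd j (σ i j) x = ∑ j, ∑ r, ∑ s, F j r s :=
      Finset.sum_congr rfl fun j _ => key j
    rw [hT]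
    have h2 : ∑ j, ∑ r, ∑ s, F j r s = - ∑ j, ∑ r, ∑ s, F j r s := by
      calc ∑ j, ∑ r, ∑ s, F j r s
          = ∑ j, ∑ r, ∑ s, -F s r j :=
            Finset.sum_congr rfl fun j _ => Finset.sum_congr rfl fun r _ =>
              Finset.sum_congr rfl fun s _ => hanti j r s
        _ = - ∑ j, ∑ r, ∑ s, F s r j := by simp
        _ = - ∑ j, ∑ r, ∑ s, F j r s := by rw [hre]
    linarith
end
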